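/- Monotone representation theorem: Let ψ be a Z₁-function such that for each z ∈ X the map t ↦ ψ(z,t) is continuously differentiable on Θ \ {ϑ₁(z)}, and assume that for each t ∈ Θ there exist x, y ∈ X with ϑ₁(x) < t < ϑ₁(y). Then the following are equivalent: (i) for all x, y ∈ X with ϑ₁(x) < ϑ₁(y), the map t ↦ −ψ(x,t)/ψ(y,t) is increasing on (ϑ₁(x), ϑ₁(y)); (ii) there exists a positive, locally absolutely continuous function p : Θ → ℝ such that for every z ∈ X the map t ↦ p(t)ψ(z,t) is decreasing on Θ and locally absolutely continuous on Θ \ {ϑ₁(z)}. -/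

import Mathlib

open Set

/-- `f` is absolutely continuous on the compact interval `[a,b]`. -/
def AbsContOnIcc (f : ℝ → ℝ) (a b : ℝ) : Prop :=
  ∀ ε > (0 : ℝ), ∃ δ > (0 : ℝ), ∀ (n : ℕ) (u v : Fin n → ℝ),
    (∀ i, a ≤ u i ∧ u i ≤ v i ∧ v i ≤ b) →
    (Pairwise fun i j => Set.Ioo (u i) (v i) ∩ Set.Ioo (u j) (v j) = ∅) →
    (∑ i, (v i - u i)) < δ → (∑ i, |f (v i) - f (u i)|) < ε

/-- `f` is locally absolutely continuous on the set `U`. -/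
def LocAbsCont (f : ℝ → ℝ) (U : Set ℝ) : Prop :=
  ∀ a b : ℝ, a ≤ b → Set.Icc a b ⊆ U → AbsContOnIcc f a b

open Real NNReal

/-!
Write `g z = log |ψ z|` (in Lean simply `fun t => log (ψ z t)`, since `Real.log x = Real.log |x|`).
Taking logarithms, (i) says that `g x - g y` increases on `(ϑ x, ϑ y)`, and (ii) with
`p = exp L` says that `L + g z` increases to the right of `ϑ z` and decreases to its left, i.e.
`g z s - g z t ≤ L t - L s ≤ g w s - g w t` whenever `ϑ z < s ≤ t < ϑ w`.
Such an `L` is obtained by letting `L t - L s` be the supremum, over chains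
`s = u₀ ≤ ⋯ ≤ uₙ = t`, of sums of lower increments `g zᵢ uᵢ - g zᵢ uᵢ₊₁` with `ϑ zᵢ < uᵢ`:
this supremum is additive in the interval, and (i) bounds it by every upper increment.
On a compact subinterval `L` is squeezed between increments of the `C¹` functions `g x` and
`g y`, so it is Lipschitz there, and then so are `p` and `p ψ z`; Lipschitz functions are
absolutely continuous. Conversely, `-ψ x / ψ y = (-p ψ x) / (p ψ y)` is a positive increasing
function divided by a positive decreasing one.
-/

theorem IsOpen.contDiffOn_one_of_continuousOn_deriv {f : ℝ → ℝ} {U : Set ℝ} (hU : IsOpen U)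
    (hd : ∀ t ∈ U, DifferentiableAt ℝ f t) (hc : ContinuousOn (deriv f) U) :
    ContDiffOn ℝ 1 f U :=
  (contDiffOn_succ_iff_deriv_of_isOpen (n := 0) hU).2
    ⟨fun t ht => (hd t ht).differentiableWithinAt, by simp, contDiffOn_zero.2 hc⟩

theorem LocallyLipschitz.exists_lipschitzOnWith_comp {α β γ : Type*} [PseudoMetricSpace α]
    [PseudoMetricSpace β] [PseudoMetricSpace γ] {φ : β → γ} {f : α → β} {s : Set α} {K : ℝ≥0}
    (hφ : LocallyLipschitz φ) (hf : LipschitzOnWith K f s) (hs : IsCompact s) :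
    ∃ K', LipschitzOnWith K' (φ ∘ f) s := by
  obtain ⟨Kφ, hKφ⟩ := hφ.locallyLipschitzOn.exists_lipschitzOnWith_of_compact
    (hs.image_of_continuousOn hf.continuousOn)
  exact ⟨Kφ * K, hKφ.comp hf (mapsTo_image f s)⟩

theorem LipschitzOnWith.of_monotoneOn_add_of_antitoneOn_add {f g h : ℝ → ℝ} {s : Set ℝ}
    {K : ℝ≥0} (hg : LipschitzOnWith K g s) (hh : LipschitzOnWith K h s)
    (hfg : MonotoneOn (fun t => f t + g t) s) (hfh : AntitoneOn (fun t => f t + h t) s) :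
    LipschitzOnWith K f s := by
  refine LipschitzOnWith.of_le_add_mul K fun x hx y hy => ?_
  rcases le_total x y with hxy | hyx
  · have hgxy := hg.le_add_mul hy hx
    have hfgxy : f x + g x ≤ f y + g y := hfg hx hy hxy
    rw [dist_comm] at hgxy
    linarith
  · have hhxy := hh.le_add_mul hy hx
    have hfhxy : f x + h x ≤ f y + h y := hfh hy hx hyx
    rw [dist_comm] at hhxy
    linarith

theorem LipschitzOnWith.absContOnIcc {f : ℝ → ℝ} {K : ℝ≥0} {a b : ℝ}
    (hf : LipschitzOnWith K f (Icc a b)) : AbsContOnIcc f a b := by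
  intro ε hε
  refine ⟨ε / (K + 1), by positivity, fun n u v hmem _ hlen => ?_⟩
  have hstep : ∀ i, |f (v i) - f (u i)| ≤ K * (v i - u i) := fun i => by
    obtain ⟨hau, huv, hvb⟩ := hmem i
    simpa [Real.dist_eq, abs_of_nonneg (sub_nonneg.2 huv)] using
      hf.dist_le_mul (v i) ⟨hau.trans huv, hvb⟩ (u i) ⟨hau, huv.trans hvb⟩
  calc ∑ i, |f (v i) - f (u i)| ≤ ∑ i, K * (v i - u i) := Finset.sum_le_sum fun i _ => hstep i
    _ = K * ∑ i, (v i - u i) := (Finset.mul_sum ..).symm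
    _ ≤ K * (ε / (K + 1)) := by gcongr
    _ < (K + 1) * (ε / (K + 1)) := by gcongr; linarith
    _ = ε := by field_simp

theorem locAbsCont_of_exists_lipschitzOnWith {f : ℝ → ℝ} {U : Set ℝ}
    (hf : ∀ a b, a ≤ b → Icc a b ⊆ U → ∃ K, LipschitzOnWith K f (Icc a b)) : LocAbsCont f U :=
  fun a b hab hU => (hf a b hab hU).choose_spec.absContOnIcc

theorem monotoneOn_log_sub_log {f g : ℝ → ℝ} {s : Set ℝ} (hf : ∀ t ∈ s, f t < 0)
    (hg : ∀ t ∈ s, 0 < g t) (h : MonotoneOn (fun t => -(f t / g t)) s) :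
    MonotoneOn (fun t => log (f t) - log (g t)) s := by
  have hlog : ∀ t ∈ s, log (f t) - log (g t) = log (-(f t / g t)) := fun t ht => by
    rw [log_neg_eq_log, log_div (hf t ht).ne (hg t ht).ne']
  intro a ha b hb hab
  simp only [hlog a ha, hlog b hb]
  exact log_le_log (neg_pos.2 (div_neg_of_neg_of_pos (hf a ha) (hg a ha))) (h ha hb hab)

theorem monotoneOn_neg_div_of_antitoneOn_mul {p f g : ℝ → ℝ} {s : Set ℝ}
    (hp : ∀ t ∈ s, 0 < p t) (hf : ∀ t ∈ s, f t < 0) (hg : ∀ t ∈ s, 0 < g t)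
    (hpf : AntitoneOn (fun t => p t * f t) s) (hpg : AntitoneOn (fun t => p t * g t) s) :
    MonotoneOn (fun t => -(f t / g t)) s := by
  have hquot : ∀ t ∈ s, -(f t / g t) = -(p t * f t) / (p t * g t) := fun t ht => by
    rw [neg_div, mul_div_mul_left _ _ (hp t ht).ne']
  intro a ha b hb hab
  simp only [hquot a ha, hquot b hb]
  exact div_le_div₀ (neg_nonneg.2 (mul_neg_of_pos_of_neg (hp b hb) (hf b hb)).le)
    (neg_le_neg (hpf ha hb hab)) (mul_pos (hp b hb) (hg b hb)) (hpg ha hb hab)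

theorem antitoneOn_exp_mul {S : Set ℝ} {f L : ℝ → ℝ} {c : ℝ}
    (hpos : ∀ t ∈ S, t < c → 0 < f t) (hneg : ∀ t ∈ S, c < t → f t < 0) (hc : f c = 0)
    (hright : MonotoneOn (fun t => L t + log (f t)) (S ∩ Ioi c))
    (hleft : AntitoneOn (fun t => L t + log (f t)) (S ∩ Iio c)) :
    AntitoneOn (fun t => exp (L t) * f t) S := by
  intro s hs t ht hst
  dsimp only
  rcases lt_or_ge t c with htc | hct
  · have hsc := hst.trans_lt htc
    calc exp (L t) * f t = exp (L t + log (f t)) := by rw [exp_add, exp_log (hpos t ht htc)]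
      _ ≤ exp (L s + log (f s)) := exp_le_exp.2 (hleft ⟨hs, hsc⟩ ⟨ht, htc⟩ hst)
      _ = exp (L s) * f s := by rw [exp_add, exp_log (hpos s hs hsc)]
  rcases lt_or_ge c s with hcs | hsc
  · have hct' := hcs.trans_le hst
    calc exp (L t) * f t = -exp (L t + log (f t)) := by
          rw [exp_add, exp_log_of_neg (hneg t ht hct'), mul_neg, neg_neg]
      _ ≤ -exp (L s + log (f s)) := neg_le_neg (exp_le_exp.2 (hright ⟨hs, hcs⟩ ⟨ht, hct'⟩ hst))
      _ = exp (L s) * f s := by rw [exp_add, exp_log_of_neg (hneg s hs hcs), mul_neg, neg_neg]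
  · have hft : f t ≤ 0 := hct.eq_or_lt.elim (fun h => h ▸ hc.le) fun h => (hneg t ht h).le
    have hfs : 0 ≤ f s := hsc.eq_or_lt.elim (fun h => h ▸ hc.ge) fun h => (hpos s hs h).le
    exact (mul_nonpos_of_nonneg_of_nonpos (exp_pos _).le hft).trans
      (mul_nonneg (exp_pos _).le hfs)

theorem exists_sub_eq_of_add {S : Set ℝ} {A : ℝ → ℝ → ℝ}
    (hA : ∀ s ∈ S, ∀ t ∈ S, ∀ u ∈ S, s ≤ t → t ≤ u → A s u = A s t + A t u) :
    ∃ L : ℝ → ℝ, ∀ s ∈ S, ∀ t ∈ S, s ≤ t → L t - L s = A s t := by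
  rcases S.eq_empty_or_nonempty with rfl | ⟨t₀, ht₀⟩
  · exact ⟨0, by simp⟩
  refine ⟨fun t => if t₀ ≤ t then A t₀ t else -A t t₀, fun s hs t ht hst => ?_⟩
  dsimp only
  rcases le_or_gt t₀ s with h₀s | hs₀
  · rw [if_pos h₀s, if_pos (h₀s.trans hst)]
    linarith [hA t₀ ht₀ s hs t ht h₀s hst]
  rcases le_or_gt t₀ t with h₀t | ht₀'
  · rw [if_neg hs₀.not_ge, if_pos h₀t]
    linarith [hA s hs t₀ ht₀ t ht hs₀.le h₀t]
  · rw [if_neg hs₀.not_ge, if_neg ht₀'.not_ge]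
    linarith [hA s hs t ht t₀ ht₀ hst ht₀'.le]

section IncrementChain

variable {ι : Type*} {S : Set ℝ} {g : ι → ℝ → ℝ} {θ : ι → ℝ}

variable (S g θ) in
inductive IncrementChain : ℝ → ℝ → ℝ → Prop
  | refl {s : ℝ} : s ∈ S → IncrementChain s s 0
  | step {s u v r : ℝ} (z : ι) : IncrementChain s u r → u ≤ v → v ∈ S → θ z < u →
      IncrementChain s v (r + (g z u - g z v))

variable (S g θ) in
noncomputable def incrementChainSup (s t : ℝ) : ℝ :=
  sSup {r | IncrementChain S g θ s t r}

variable (hmono : ∀ z w, θ z < θ w → MonotoneOn (fun t => g z t - g w t) (S ∩ Ioo (θ z) (θ w)))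
  (hsurr : ∀ t ∈ S, ∃ x y, θ x < t ∧ t < θ y)

namespace IncrementChain

theorem right_mem {s t r : ℝ} (h : IncrementChain S g θ s t r) : t ∈ S := by
  cases h with
  | refl ht => exact ht
  | step _ _ _ ht _ => exact ht

theorem single {s t : ℝ} (hs : s ∈ S) (ht : t ∈ S) (hst : s ≤ t) {z : ι} (hz : θ z < s) :
    IncrementChain S g θ s t (g z s - g z t) := by
  simpa using (refl hs).step z hst ht hz

theorem trans {s m t r₁ r₂ : ℝ} (h₁ : IncrementChain S g θ s m r₁)
    (h₂ : IncrementChain S g θ m t r₂) : IncrementChain S g θ s t (r₁ + r₂) := by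
  induction h₂ with
  | refl => simpa using h₁
  | step z _ huv hv hz ih =>
    rw [← add_assoc]
    exact ih.step z huv hv hz

theorem exists_split {s u r t : ℝ} (h : IncrementChain S g θ s u r) (hst : s ≤ t) (htu : t ≤ u)
    (ht : t ∈ S) : ∃ r₁ r₂, IncrementChain S g θ s t r₁ ∧ IncrementChain S g θ t u r₂ ∧
      r = r₁ + r₂ := by
  induction h generalizing t with
  | refl hs =>
    obtain rfl := le_antisymm htu hst
    exact ⟨0, 0, refl hs, refl hs, by simp⟩
  | @step m u r z h hmu hu hz ih =>
    rcases le_total t m with htm | hmt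
    · obtain ⟨r₁, r₂, h₁, h₂, rfl⟩ := ih hst htm ht
      exact ⟨r₁, r₂ + (g z m - g z u), h₁, h₂.step z hmu hu hz, by ring⟩
    · exact ⟨r + (g z m - g z t), g z t - g z u, h.step z hmt ht hz,
        single ht hu htu (hz.trans_le hmt), by ring⟩

include hmono in
theorem le_sub {s t r : ℝ} (h : IncrementChain S g θ s t r) {w : ι} (hw : t < θ w) :
    r ≤ g w s - g w t := by
  induction h with
  | refl => simp
  | @step u v r z h huv hv hz ih =>
    have hzw : g z u - g w u ≤ g z v - g w v :=
      hmono z w (hz.trans_le huv |>.trans hw) ⟨h.right_mem, hz, huv.trans_lt hw⟩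
        ⟨hv, hz.trans_le huv, hw⟩ huv
    linarith [ih (huv.trans_lt hw)]

end IncrementChain

include hmono hsurr

theorem bddAbove_incrementChain {s t : ℝ} (ht : t ∈ S) :
    BddAbove {r | IncrementChain S g θ s t r} := by
  obtain ⟨-, w, -, hw⟩ := hsurr t ht
  exact ⟨g w s - g w t, fun r hr => hr.le_sub hmono hw⟩

theorem sub_le_incrementChainSup {s t : ℝ} (hs : s ∈ S) (ht : t ∈ S) (hst : s ≤ t) {z : ι}
    (hz : θ z < s) : g z s - g z t ≤ incrementChainSup S g θ s t :=
  le_csSup (bddAbove_incrementChain hmono hsurr ht) (IncrementChain.single hs ht hst hz)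

theorem incrementChainSup_le_sub {s t : ℝ} (hs : s ∈ S) (ht : t ∈ S) (hst : s ≤ t) {w : ι}
    (hw : t < θ w) : incrementChainSup S g θ s t ≤ g w s - g w t := by
  obtain ⟨x, -, hx, -⟩ := hsurr s hs
  exact csSup_le ⟨_, IncrementChain.single hs ht hst hx⟩ fun r hr => hr.le_sub hmono hw

open scoped Pointwise in
theorem incrementChainSup_add {s t u : ℝ} (hs : s ∈ S) (ht : t ∈ S) (hu : u ∈ S) (hst : s ≤ t)
    (htu : t ≤ u) : incrementChainSup S g θ s u =
      incrementChainSup S g θ s t + incrementChainSup S g θ t u := by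
  have hsplit : {r | IncrementChain S g θ s u r} =
      {r | IncrementChain S g θ s t r} + {r | IncrementChain S g θ t u r} := by
    ext r
    constructor
    · intro hr
      obtain ⟨r₁, r₂, h₁, h₂, rfl⟩ := hr.exists_split hst htu ht
      exact ⟨r₁, h₁, r₂, h₂, rfl⟩
    · rintro ⟨r₁, h₁, r₂, h₂, rfl⟩
      exact h₁.trans h₂
  obtain ⟨x, -, hx, -⟩ := hsurr s hs
  obtain ⟨x', -, hx', -⟩ := hsurr t ht
  rw [incrementChainSup, hsplit]
  exact csSup_add ⟨_, IncrementChain.single hs ht hst hx⟩ (bddAbove_incrementChain hmono hsurr ht)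
    ⟨_, IncrementChain.single ht hu htu hx'⟩ (bddAbove_incrementChain hmono hsurr hu)

theorem exists_monotoneOn_add_antitoneOn_add :
    ∃ L : ℝ → ℝ, ∀ z, MonotoneOn (fun t => L t + g z t) (S ∩ Ioi (θ z)) ∧
      AntitoneOn (fun t => L t + g z t) (S ∩ Iio (θ z)) := by
  obtain ⟨L, hL⟩ := exists_sub_eq_of_add (A := incrementChainSup S g θ)
    fun s hs t ht u hu hst htu => incrementChainSup_add hmono hsurr hs ht hu hst htu
  refine ⟨L, fun z => ⟨fun s hs t ht hst => ?_, fun s hs t ht hst => ?_⟩⟩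
  · linarith [hL s hs.1 t ht.1 hst, sub_le_incrementChainSup hmono hsurr hs.1 ht.1 hst hs.2]
  · linarith [hL s hs.1 t ht.1 hst, incrementChainSup_le_sub hmono hsurr hs.1 ht.1 hst ht.2]

end IncrementChain

theorem LipschitzOnWith.exists_lipschitzOnWith_mul {α : Type*} [PseudoMetricSpace α]
    {f g : α → ℝ} {s : Set α} {Kf Kg : ℝ≥0} (hs : IsCompact s) (hf : LipschitzOnWith Kf f s)
    (hg : LipschitzOnWith Kg g s) : ∃ K, LipschitzOnWith K (fun t => f t * g t) s :=
  (contDiff_mul (𝕜 := ℝ)).locallyLipschitz.exists_lipschitzOnWith_comp (hf.prodMk hg) hs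

theorem exists_lipschitzOnWith_Icc_of_monotoneOn_add_antitoneOn_add {ι : Type*} {S : Set ℝ}
    {g : ι → ℝ → ℝ} {θ : ι → ℝ} {L : ℝ → ℝ}
    (hL : ∀ z, MonotoneOn (fun t => L t + g z t) (S ∩ Ioi (θ z)) ∧
      AntitoneOn (fun t => L t + g z t) (S ∩ Iio (θ z)))
    (hsurr : ∀ t ∈ S, ∃ x y, θ x < t ∧ t < θ y) (hg : ∀ z, ContDiffOn ℝ 1 (g z) (S \ {θ z}))
    {a b : ℝ} (hab : a ≤ b) (hS : Icc a b ⊆ S) : ∃ K, LipschitzOnWith K L (Icc a b) := by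
  obtain ⟨x, -, hx, -⟩ := hsurr a (hS (left_mem_Icc.2 hab))
  obtain ⟨-, y, -, hy⟩ := hsurr b (hS (right_mem_Icc.2 hab))
  have hright : Icc a b ⊆ S ∩ Ioi (θ x) := fun t ht => ⟨hS ht, hx.trans_le ht.1⟩
  have hleft : Icc a b ⊆ S ∩ Iio (θ y) := fun t ht => ⟨hS ht, ht.2.trans_lt hy⟩
  obtain ⟨Kx, hKx⟩ := ((hg x).mono fun t ht => ⟨hS ht, (hright ht).2.ne'⟩).exists_lipschitzOnWith
    one_ne_zero (convex_Icc a b) isCompact_Icc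
  obtain ⟨Ky, hKy⟩ := ((hg y).mono fun t ht => ⟨hS ht, (hleft ht).2.ne⟩).exists_lipschitzOnWith
    one_ne_zero (convex_Icc a b) isCompact_Icc
  exact ⟨max Kx Ky, .of_monotoneOn_add_of_antitoneOn_add (hKx.weaken (le_max_left ..))
    (hKy.weaken (le_max_right ..)) ((hL x).1.mono hright) ((hL y).2.mono hleft)⟩

theorem monotone_representation_general {X : Type*}
    (Θ : Set ℝ) (hopen : IsOpen Θ) (hord : Θ.OrdConnected)
    (ψ : X → ℝ → ℝ)
    (ϑ : X → ℝ) (hϑmem : ∀ x : X, ϑ x ∈ Θ)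
    (hTpos : ∀ x : X, ∀ t ∈ Θ, t < ϑ x → 0 < ψ x t)
    (hTneg : ∀ x : X, ∀ t ∈ Θ, ϑ x < t → ψ x t < 0)
    (hZ : ∀ x : X, ψ x (ϑ x) = 0)
    (hdiff : ∀ z : X, ∀ t ∈ Θ \ {ϑ z}, DifferentiableAt ℝ (ψ z) t)
    (hcontderiv : ∀ z : X, ContinuousOn (deriv (ψ z)) (Θ \ {ϑ z}))
    (hsurr : ∀ t ∈ Θ, ∃ x y : X, ϑ x < t ∧ t < ϑ y) :
    (∀ x y : X, ϑ x < ϑ y →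
        MonotoneOn (fun t => -(ψ x t / ψ y t)) (Set.Ioo (ϑ x) (ϑ y))) ↔
    (∃ p : ℝ → ℝ, (∀ t ∈ Θ, 0 < p t) ∧ LocAbsCont p Θ ∧
        ∀ z : X, AntitoneOn (fun t => p t * ψ z t) Θ ∧
          LocAbsCont (fun t => p t * ψ z t) (Θ \ {ϑ z})) := by
  have hψC1 : ∀ z, ContDiffOn ℝ 1 (ψ z) (Θ \ {ϑ z}) := fun z =>
    (hopen.sdiff isClosed_singleton).contDiffOn_one_of_continuousOn_deriv (hdiff z) (hcontderiv z)
  constructor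
  · intro hm
    have hlogC1 : ∀ z, ContDiffOn ℝ 1 (fun t => log (ψ z t)) (Θ \ {ϑ z}) := fun z =>
      (hψC1 z).log fun t ht => (lt_or_gt_of_ne ht.2).elim (fun h => (hTpos z t ht.1 h).ne')
        fun h => (hTneg z t ht.1 h).ne
    obtain ⟨L, hL⟩ := exists_monotoneOn_add_antitoneOn_add (g := fun z t => log (ψ z t))
      (fun x y hxy => monotoneOn_log_sub_log (fun t ht => hTneg x t ht.1 ht.2.1)
        (fun t ht => hTpos y t ht.1 ht.2.2) ((hm x y hxy).mono inter_subset_right)) hsurr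
    have hexpLip : ∀ a b, a ≤ b → Icc a b ⊆ Θ →
        ∃ K, LipschitzOnWith K (fun t => exp (L t)) (Icc a b) := fun a b hab hΘ => by
      obtain ⟨K, hK⟩ := exists_lipschitzOnWith_Icc_of_monotoneOn_add_antitoneOn_add hL hsurr
        hlogC1 hab hΘ
      exact contDiff_exp.locallyLipschitz.exists_lipschitzOnWith_comp hK isCompact_Icc
    refine ⟨fun t => exp (L t), fun t _ => exp_pos _, locAbsCont_of_exists_lipschitzOnWith hexpLip,
      fun z => ⟨antitoneOn_exp_mul (hTpos z) (hTneg z) (hZ z) (hL z).1 (hL z).2,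
        locAbsCont_of_exists_lipschitzOnWith fun a b hab hΘ => ?_⟩⟩
    obtain ⟨K, hK⟩ := hexpLip a b hab (hΘ.trans sdiff_subset)
    obtain ⟨K', hK'⟩ := ((hψC1 z).mono hΘ).exists_lipschitzOnWith one_ne_zero
      (convex_Icc a b) isCompact_Icc
    exact hK.exists_lipschitzOnWith_mul isCompact_Icc hK'
  · rintro ⟨p, hp, -, hprod⟩ x y hxy
    have hΘ : Ioo (ϑ x) (ϑ y) ⊆ Θ := Ioo_subset_Icc_self.trans (hord.out (hϑmem x) (hϑmem y))
    exact monotoneOn_neg_div_of_antitoneOn_mul (fun t ht => hp t (hΘ ht))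
      (fun t ht => hTneg x t (hΘ ht) ht.1) (fun t ht => hTpos y t (hΘ ht) ht.2)
      ((hprod x).1.mono hΘ) ((hprod y).1.mono hΘ)

/-- Monotone representation theorem for generalized `ψ`-estimators: the quotient maps
`t ↦ -ψ(x,t)/ψ(y,t)` are increasing on `(ϑ₁(x), ϑ₁(y))` if and only if there is a
positive locally absolutely continuous weight `p` making every `t ↦ p(t)ψ(z,t)`
decreasing on `Θ` (and locally absolutely continuous off `ϑ₁(z)`). -/
theorem monotone_representation {X : Type*} [Nonempty X]
    (Θ : Set ℝ) (hopen : IsOpen Θ) (hord : Θ.OrdConnected)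
    (hnd : ∃ a ∈ Θ, ∃ b ∈ Θ, a ≠ b)
    (ψ : X → ℝ → ℝ)
    (ϑ : X → ℝ) (hϑmem : ∀ x : X, ϑ x ∈ Θ)
    (hTpos : ∀ x : X, ∀ t ∈ Θ, t < ϑ x → 0 < ψ x t)
    (hTneg : ∀ x : X, ∀ t ∈ Θ, ϑ x < t → ψ x t < 0)
    (hZ : ∀ x : X, ψ x (ϑ x) = 0)
    (hdiff : ∀ z : X, ∀ t ∈ Θ \ {ϑ z}, DifferentiableAt ℝ (ψ z) t)
    (hcontderiv : ∀ z : X, ContinuousOn (deriv (ψ z)) (Θ \ {ϑ z}))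
    (hsurr : ∀ t ∈ Θ, ∃ x y : X, ϑ x < t ∧ t < ϑ y) :
    (∀ x y : X, ϑ x < ϑ y →
        MonotoneOn (fun t => -(ψ x t / ψ y t)) (Set.Ioo (ϑ x) (ϑ y))) ↔
    (∃ p : ℝ → ℝ, (∀ t ∈ Θ, 0 < p t) ∧ LocAbsCont p Θ ∧
        ∀ z : X, AntitoneOn (fun t => p t * ψ z t) Θ ∧
          LocAbsCont (fun t => p t * ψ z t) (Θ \ {ϑ z})) :=
  monotone_representation_general Θ hopen hord ψ ϑ hϑmem hTpos hTneg hZ hdiff hcontderiv hsurr
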